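/- For every natural number n ≥ 3, the sunflower graph SF_n admits an equitable proper coloring using exactly 4 colors. -/
import Mathlib


open Finset

/-- The size of the color class of color `i` under the coloring `c`. -/
def classSize {V : Type*} [Fintype V] {k : ℕ} (c : V → Fin k) (i : Fin k) : ℕ :=
  (Finset.univ.filter (fun v => c v = i)).card

/-- The equitable coloring mean `μ = (∑ i·θ_i)/N` (colors indexed `1,…,k`). -/
def eqMean {V : Type*} [Fintype V] {k : ℕ} (c : V → Fin k) : ℚ :=
  (∑ i : Fin k, (((i : ℕ) : ℚ) + 1) * (classSize c i : ℚ)) / (Fintype.card V : ℚ)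

/-- The equitable coloring variance `σ² = (∑ i²·θ_i)/N − μ²`. -/
def eqVar {V : Type*} [Fintype V] {k : ℕ} (c : V → Fin k) : ℚ :=
  (∑ i : Fin k, (((i : ℕ) : ℚ) + 1) ^ 2 * (classSize c i : ℚ)) / (Fintype.card V : ℚ)
    - (eqMean c) ^ 2

/-- The sunflower graph `SF_n`: the wheel graph `W_n` (center `none`, rim `some (Sum.inl i)`)
together with vertices `u_i = some (Sum.inr i)`, each adjacent to `v_i` and `v_{i+1}`. -/
def sunflowerGraph (n : ℕ) : SimpleGraph (Option (Fin n ⊕ Fin n)) :=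
  SimpleGraph.fromRel (fun a b =>
    match a, b with
    | none, some (Sum.inl _) => True
    | some (Sum.inl i), some (Sum.inl j) => j.val = (i.val + 1) % n
    | some (Sum.inr i), some (Sum.inl j) => j = i ∨ j.val = (i.val + 1) % n
    | _, _ => False)

/-- rim color -/
def cvN (n x : ℕ) : Fin 4 :=
  if n % 2 = 1 ∧ x = n - 1 then 2 else if x % 2 = 0 then 0 else 1

/-- outer color -/
def cuN (n x : ℕ) : Fin 4 :=
  if n % 2 = 1 ∧ x = n - 2 then 0
  else if n % 2 = 1 ∧ x = n - 1 then 1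
  else if x < n / 2 then 2 else 3

def sfCol (n : ℕ) : Option (Fin n ⊕ Fin n) → Fin 4
  | none => 3
  | some (Sum.inl i) => cvN n i.val
  | some (Sum.inr i) => cuN n i.val

lemma cv_ne_three (n i : ℕ) : cvN n i ≠ 3 := by
  unfold cvN; split_ifs <;> decide

lemma mod_succ_cases (n i : ℕ) (hi : i < n) :
    (i + 1) % n = i + 1 ∧ i + 1 < n ∨ (i + 1) % n = 0 ∧ i + 1 = n := by
  rcases Nat.lt_or_ge (i + 1) n with h | h
  · exact Or.inl ⟨Nat.mod_eq_of_lt h, h⟩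
  · have : i + 1 = n := by omega
    exact Or.inr ⟨by rw [this, Nat.mod_self], this⟩

lemma cv_ne_cv (n i j : ℕ) (hn : 3 ≤ n) (hi : i < n) (hj : j < n)
    (h : j = (i + 1) % n) : cvN n i ≠ cvN n j := by
  have := mod_succ_cases n i hi
  unfold cvN; split_ifs <;> first | decide | (exfalso; omega)

lemma cu_ne_cv (n i j : ℕ) (hn : 3 ≤ n) (hi : i < n) (hj : j < n)
    (h : j = i ∨ j = (i + 1) % n) : cuN n i ≠ cvN n j := by
  have := mod_succ_cases n i hi
  unfold cuN cvN; split_ifs <;> first | decide | (exfalso; omega)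

lemma sum_parity0 (k : ℕ) :
    ∑ x ∈ range k, (if x % 2 = 0 then (1:ℕ) else 0) = (k + 1) / 2 := by
  induction k with
  | zero => simp
  | succ k ih => rw [Finset.sum_range_succ, ih]; split_ifs with h <;> omega

lemma sum_parity1 (k : ℕ) :
    ∑ x ∈ range k, (if x % 2 = 1 then (1:ℕ) else 0) = k / 2 := by
  induction k with
  | zero => simp
  | succ k ih => rw [Finset.sum_range_succ, ih]; split_ifs with h <;> omega

lemma sum_lt (k m : ℕ) :
    ∑ x ∈ range k, (if x < m then (1:ℕ) else 0) = min m k := by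
  induction k with
  | zero => simp
  | succ k ih => rw [Finset.sum_range_succ, ih]; split_ifs with h <;> omega

lemma sum_ge (k m : ℕ) :
    ∑ x ∈ range k, (if x < m then (0:ℕ) else 1) = k - min m k := by
  induction k with
  | zero => simp
  | succ k ih => rw [Finset.sum_range_succ, ih]; split_ifs with h <;> omega

lemma classSize_sfCol (n : ℕ) (col : Fin 4) :
    classSize (sfCol n) col =
      (if (3:Fin 4) = col then 1 else 0) +
      ((∑ x ∈ range n, if cvN n x = col then 1 else 0) +
       ∑ x ∈ range n, if cuN n x = col then 1 else 0) := by
  rw [classSize, Finset.card_filter, Fintype.sum_option, Fintype.sum_sum_type]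
  congr 1
  congr 1 <;> (rw [← Fin.sum_univ_eq_sum_range]; rfl)

theorem sunflower_equitable_four_coloring (n : ℕ) (hn : 3 ≤ n) :
    ∃ c : Option (Fin n ⊕ Fin n) → Fin (4),
        (∀ u v, (sunflowerGraph n).Adj u v → c u ≠ c v) ∧
        Function.Surjective c ∧
        (∀ i j : Fin (4), classSize c i ≤ classSize c j + 1) := by
  refine ⟨sfCol n, ?_, ?_, ?_⟩
  · intro u v hadj
    rw [sunflowerGraph, SimpleGraph.fromRel_adj] at hadj
    obtain ⟨hne, h⟩ := hadj
    match u, v with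
    | none, none => simp at h
    | none, some (Sum.inl j) =>
      simp only [sfCol]
      exact fun hc => cv_ne_three n j.val hc.symm
    | none, some (Sum.inr j) => simp at h
    | some (Sum.inl i), none =>
      simp only [sfCol]
      exact fun hc => cv_ne_three n i.val hc
    | some (Sum.inr i), none => simp at h
    | some (Sum.inl i), some (Sum.inl j) =>
      simp only [sfCol]
      rcases h with h | h
      · exact cv_ne_cv n i.val j.val hn i.isLt j.isLt h
      · exact (cv_ne_cv n j.val i.val hn j.isLt i.isLt h).symm
    | some (Sum.inl i), some (Sum.inr j) =>
      simp only [sfCol]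
      rcases h with h | h
      · simp at h
      · refine (cu_ne_cv n j.val i.val hn j.isLt i.isLt ?_).symm
        rcases h with h | h
        · exact Or.inl (congrArg Fin.val h)
        · exact Or.inr h
    | some (Sum.inr i), some (Sum.inl j) =>
      simp only [sfCol]
      rcases h with h | h
      · refine cu_ne_cv n i.val j.val hn i.isLt j.isLt ?_
        rcases h with h | h
        · exact Or.inl (congrArg Fin.val h)
        · exact Or.inr h
      · simp at h
    | some (Sum.inr i), some (Sum.inr j) => simp at h
  · have hv0 : cvN n 0 = 0 := by unfold cvN; rw [if_neg (by omega), if_pos (by omega)]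
    have hv1 : cvN n 1 = 1 := by unfold cvN; rw [if_neg (by omega), if_neg (by omega)]
    have hu0 : cuN n 0 = 2 := by
      unfold cuN; rw [if_neg (by omega), if_neg (by omega), if_pos (by omega)]
    intro col
    fin_cases col
    · exact ⟨some (Sum.inl ⟨0, by omega⟩), hv0⟩
    · exact ⟨some (Sum.inl ⟨1, by omega⟩), hv1⟩
    · exact ⟨some (Sum.inr ⟨0, by omega⟩), hu0⟩
    · exact ⟨none, rfl⟩
  · -- counting
    rcases Nat.even_or_odd n with he | ho
    · -- even case
      have h2 : n % 2 = 0 := Nat.even_iff.mp he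
      have hv : ∀ x ∈ range n, cvN n x = if x % 2 = 0 then (0 : Fin 4) else 1 := by
        intro x hx; unfold cvN; rw [if_neg (by omega)]
      have hu : ∀ x ∈ range n, cuN n x = if x < n / 2 then (2 : Fin 4) else 3 := by
        intro x hx; unfold cuN; rw [if_neg (by omega), if_neg (by omega)]
      have ev0 : (∑ x ∈ range n, if cvN n x = (0:Fin 4) then (1:ℕ) else 0)
          = ∑ x ∈ range n, if x % 2 = 0 then (1:ℕ) else 0 := by
        refine Finset.sum_congr rfl fun x hx => ?_
        rw [hv x hx]; rcases Nat.mod_two_eq_zero_or_one x with h | h <;> simp [h]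
      have eu0 : (∑ x ∈ range n, if cuN n x = (0:Fin 4) then (1:ℕ) else 0)
          = ∑ x ∈ range n, (0:ℕ) := by
        refine Finset.sum_congr rfl fun x hx => ?_
        rw [hu x hx]; by_cases h : x < n / 2 <;> simp [h]
      have ev1 : (∑ x ∈ range n, if cvN n x = (1:Fin 4) then (1:ℕ) else 0)
          = ∑ x ∈ range n, if x % 2 = 1 then (1:ℕ) else 0 := by
        refine Finset.sum_congr rfl fun x hx => ?_
        rw [hv x hx]; rcases Nat.mod_two_eq_zero_or_one x with h | h <;> simp [h]
      have eu1 : (∑ x ∈ range n, if cuN n x = (1:Fin 4) then (1:ℕ) else 0)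
          = ∑ x ∈ range n, (0:ℕ) := by
        refine Finset.sum_congr rfl fun x hx => ?_
        rw [hu x hx]; by_cases h : x < n / 2 <;> simp [h]
      have ev2 : (∑ x ∈ range n, if cvN n x = (2:Fin 4) then (1:ℕ) else 0)
          = ∑ x ∈ range n, (0:ℕ) := by
        refine Finset.sum_congr rfl fun x hx => ?_
        rw [hv x hx]; rcases Nat.mod_two_eq_zero_or_one x with h | h <;> simp [h]
      have eu2 : (∑ x ∈ range n, if cuN n x = (2:Fin 4) then (1:ℕ) else 0)
          = ∑ x ∈ range n, if x < n / 2 then (1:ℕ) else 0 := by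
        refine Finset.sum_congr rfl fun x hx => ?_
        rw [hu x hx]; by_cases h : x < n / 2 <;> simp [h]
      have ev3 : (∑ x ∈ range n, if cvN n x = (3:Fin 4) then (1:ℕ) else 0)
          = ∑ x ∈ range n, (0:ℕ) := by
        refine Finset.sum_congr rfl fun x hx => ?_
        rw [hv x hx]; rcases Nat.mod_two_eq_zero_or_one x with h | h <;> simp [h]
      have eu3 : (∑ x ∈ range n, if cuN n x = (3:Fin 4) then (1:ℕ) else 0)
          = ∑ x ∈ range n, if x < n / 2 then (0:ℕ) else 1 := by
        refine Finset.sum_congr rfl fun x hx => ?_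
        rw [hu x hx]; by_cases h : x < n / 2 <;> simp [h]
      have h0 : classSize (sfCol n) 0 = n / 2 := by
        rw [classSize_sfCol, ev0, eu0, sum_parity0, Finset.sum_const_zero,
          if_neg (by decide)]
        omega
      have h1 : classSize (sfCol n) 1 = n / 2 := by
        rw [classSize_sfCol, ev1, eu1, sum_parity1, Finset.sum_const_zero,
          if_neg (by decide)]
        omega
      have hc2 : classSize (sfCol n) 2 = n / 2 := by
        rw [classSize_sfCol, ev2, eu2, sum_lt, Finset.sum_const_zero,
          if_neg (by decide)]
        omega
      have h3 : classSize (sfCol n) 3 = n / 2 + 1 := by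
        rw [classSize_sfCol, ev3, eu3, sum_ge, Finset.sum_const_zero,
          if_pos rfl]
        omega
      have key : ∀ t : Fin 4, n / 2 ≤ classSize (sfCol n) t ∧
          classSize (sfCol n) t ≤ n / 2 + 1 := by
        intro t; fin_cases t
        · exact ⟨h0.ge, h0.le.trans (Nat.le_succ _)⟩
        · exact ⟨h1.ge, h1.le.trans (Nat.le_succ _)⟩
        · exact ⟨hc2.ge, hc2.le.trans (Nat.le_succ _)⟩
        · exact ⟨le_trans (Nat.le_succ _) h3.ge, h3.le⟩
      intro i j
      obtain ⟨hi1, hi2⟩ := key i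
      obtain ⟨hj1, hj2⟩ := key j
      omega
    · -- odd case
      have h2 : n % 2 = 1 := Nat.odd_iff.mp ho
      obtain ⟨k, rfl⟩ : ∃ k, n = k + 2 := ⟨n - 2, by omega⟩
      have hk : 1 ≤ k := by omega
      have hk2 : k % 2 = 1 := by omega
      set n := k + 2 with hn2
      have hv : ∀ x ∈ range (k + 1), cvN n x = if x % 2 = 0 then (0 : Fin 4) else 1 := by
        intro x hx
        have hx' : x < k + 1 := mem_range.mp hx
        unfold cvN; rw [if_neg (by omega)]
      have hu : ∀ x ∈ range k, cuN n x = if x < n / 2 then (2 : Fin 4) else 3 := by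
        intro x hx
        have hx' : x < k := mem_range.mp hx
        unfold cuN; rw [if_neg (by omega), if_neg (by omega)]
      have hvLast : cvN n (k + 1) = 2 := by unfold cvN; rw [if_pos (by omega)]
      have huK : cuN n k = 0 := by unfold cuN; rw [if_pos (by omega)]
      have huK1 : cuN n (k + 1) = 1 := by
        unfold cuN; rw [if_neg (by omega), if_pos (by omega)]
      have hsplitv : ∀ col : Fin 4,
          (∑ x ∈ range n, if cvN n x = col then (1:ℕ) else 0)
            = (∑ x ∈ range (k + 1), if cvN n x = col then 1 else 0)
              + (if cvN n (k + 1) = col then 1 else 0) := by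
        intro col; rw [show n = (k + 1) + 1 from rfl, Finset.sum_range_succ]
      have hsplitu : ∀ col : Fin 4,
          (∑ x ∈ range n, if cuN n x = col then (1:ℕ) else 0)
            = ((∑ x ∈ range k, if cuN n x = col then 1 else 0)
              + (if cuN n k = col then 1 else 0))
              + (if cuN n (k + 1) = col then 1 else 0) := by
        intro col
        rw [show n = (k + 1) + 1 from rfl, Finset.sum_range_succ, Finset.sum_range_succ]
      have ov0 : (∑ x ∈ range (k + 1), if cvN n x = (0:Fin 4) then (1:ℕ) else 0)
          = ∑ x ∈ range (k + 1), if x % 2 = 0 then (1:ℕ) else 0 := by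
        refine Finset.sum_congr rfl fun x hx => ?_
        rw [hv x hx]; rcases Nat.mod_two_eq_zero_or_one x with h | h <;> simp [h]
      have ou0 : (∑ x ∈ range k, if cuN n x = (0:Fin 4) then (1:ℕ) else 0)
          = ∑ x ∈ range k, (0:ℕ) := by
        refine Finset.sum_congr rfl fun x hx => ?_
        rw [hu x hx]; by_cases h : x < n / 2 <;> simp [h]
      have ov1 : (∑ x ∈ range (k + 1), if cvN n x = (1:Fin 4) then (1:ℕ) else 0)
          = ∑ x ∈ range (k + 1), if x % 2 = 1 then (1:ℕ) else 0 := by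
        refine Finset.sum_congr rfl fun x hx => ?_
        rw [hv x hx]; rcases Nat.mod_two_eq_zero_or_one x with h | h <;> simp [h]
      have ou1 : (∑ x ∈ range k, if cuN n x = (1:Fin 4) then (1:ℕ) else 0)
          = ∑ x ∈ range k, (0:ℕ) := by
        refine Finset.sum_congr rfl fun x hx => ?_
        rw [hu x hx]; by_cases h : x < n / 2 <;> simp [h]
      have ov2 : (∑ x ∈ range (k + 1), if cvN n x = (2:Fin 4) then (1:ℕ) else 0)
          = ∑ x ∈ range (k + 1), (0:ℕ) := by
        refine Finset.sum_congr rfl fun x hx => ?_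
        rw [hv x hx]; rcases Nat.mod_two_eq_zero_or_one x with h | h <;> simp [h]
      have ou2 : (∑ x ∈ range k, if cuN n x = (2:Fin 4) then (1:ℕ) else 0)
          = ∑ x ∈ range k, if x < n / 2 then (1:ℕ) else 0 := by
        refine Finset.sum_congr rfl fun x hx => ?_
        rw [hu x hx]; by_cases h : x < n / 2 <;> simp [h]
      have ov3 : (∑ x ∈ range (k + 1), if cvN n x = (3:Fin 4) then (1:ℕ) else 0)
          = ∑ x ∈ range (k + 1), (0:ℕ) := by
        refine Finset.sum_congr rfl fun x hx => ?_
        rw [hv x hx]; rcases Nat.mod_two_eq_zero_or_one x with h | h <;> simp [h]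
      have ou3 : (∑ x ∈ range k, if cuN n x = (3:Fin 4) then (1:ℕ) else 0)
          = ∑ x ∈ range k, if x < n / 2 then (0:ℕ) else 1 := by
        refine Finset.sum_congr rfl fun x hx => ?_
        rw [hu x hx]; by_cases h : x < n / 2 <;> simp [h]
      have h0 : classSize (sfCol n) 0 = (k + 2) / 2 + 1 := by
        rw [classSize_sfCol, hsplitv, hsplitu, hvLast, huK, huK1, ov0, ou0,
          sum_parity0, Finset.sum_const_zero]
        rw [if_neg (by decide), if_neg (by decide), if_pos rfl, if_neg (by decide)]
        omega
      have h1 : classSize (sfCol n) 1 = (k + 1) / 2 + 1 := by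
        rw [classSize_sfCol, hsplitv, hsplitu, hvLast, huK, huK1, ov1, ou1,
          sum_parity1, Finset.sum_const_zero]
        rw [if_neg (by decide), if_neg (by decide), if_neg (by decide), if_pos rfl]
        omega
      have hc2 : classSize (sfCol n) 2 = min (n / 2) k + 1 := by
        rw [classSize_sfCol, hsplitv, hsplitu, hvLast, huK, huK1, ov2, ou2,
          sum_lt, Finset.sum_const_zero]
        rw [if_neg (by decide), if_pos rfl, if_neg (by decide), if_neg (by decide)]
        omega
      have h3 : classSize (sfCol n) 3 = k - min (n / 2) k + 1 := by
        rw [classSize_sfCol, hsplitv, hsplitu, hvLast, huK, huK1, ov3, ou3,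
          sum_ge, Finset.sum_const_zero]
        rw [if_pos rfl, if_neg (by decide), if_neg (by decide), if_neg (by decide)]
        omega
      have key : ∀ t : Fin 4, (k + 1) / 2 ≤ classSize (sfCol n) t ∧
          classSize (sfCol n) t ≤ (k + 1) / 2 + 1 := by
        intro t; fin_cases t
        · exact ⟨le_trans (by omega) h0.ge, h0.le.trans (by omega)⟩
        · exact ⟨le_trans (by omega) h1.ge, h1.le.trans (by omega)⟩
        · exact ⟨le_trans (by omega) hc2.ge, hc2.le.trans (by omega)⟩
        · exact ⟨le_trans (by omega) h3.ge, h3.le.trans (by omega)⟩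
      intro i j
      obtain ⟨hi1, hi2⟩ := key i
      obtain ⟨hj1, hj2⟩ := key j
      omega
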